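/- arXiv:1904.03865 — 4 statements merged into one kernel-verified Lean document; each statement's English description precedes it below -/
import Mathlib

section
/- For γ ∈ ℝ, Δt > 0, α ∈ [0,1], and ε > 0, define θ_α = ε^(1+α)/(ε^(1+α)+Δt) and the eigenvalues λ_± = (1/2)(γ(1-θ_α) ± sqrt(γ²(1-θ_α)² + 4 ε^(-2α) θ_α²)). Then as ε → 0⁺ (with Δt fixed), λ_+ tends to (γ+|γ|)/2 and λ_- tends to (γ-|γ|)/2. -/
/-!
With `θ = ε^(1+α)/(ε^(1+α)+Δt)` one has `θ → 0`, and although `ε^(-2α)` blows up, the stiff term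
`ε^(-2α) θ² = ε²/(ε^(1+α)+Δt)²` still tends to `0`. Hence the discriminant tends to `γ²`, its
square root to `|γ|`, and the eigenvalues to `(γ ± |γ|)/2` by continuity.
-/

open Filter Topology

lemma tendsto_rpow_nhdsGT_zero {p : ℝ} (hp : 0 < p) :
    Tendsto (fun ε : ℝ => ε ^ p) (𝓝[>] 0) (𝓝 0) := by
  have h := (Real.continuousAt_rpow_const 0 p (Or.inr hp.le)).tendsto
  rw [Real.zero_rpow hp.ne'] at h
  exact h.mono_left nhdsWithin_le_nhds

lemma tendsto_rpow_div_rpow_add_nhdsGT_zero {p Δt : ℝ} (hp : 0 < p) (hΔt : Δt ≠ 0) :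
    Tendsto (fun ε : ℝ => ε ^ p / (ε ^ p + Δt)) (𝓝[>] 0) (𝓝 0) := by
  have h := tendsto_rpow_nhdsGT_zero hp
  have hlim := h.div (h.add_const Δt) (by rwa [zero_add])
  rwa [zero_div] at hlim

lemma Real.rpow_neg_two_mul_mul_rpow_one_add_sq {ε : ℝ} (hε : 0 < ε) (α : ℝ) :
    ε ^ (-(2 * α)) * (ε ^ (1 + α)) ^ 2 = ε ^ 2 := by
  rw [← Real.rpow_mul_natCast hε.le, ← Real.rpow_add hε, ← Real.rpow_natCast]
  congr 1
  push_cast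
  ring

lemma tendsto_rpow_neg_two_mul_mul_sq_nhdsGT_zero {α Δt : ℝ} (hα : 0 < 1 + α) (hΔt : Δt ≠ 0) :
    Tendsto (fun ε : ℝ => 4 * ε ^ (-(2 * α)) * (ε ^ (1 + α) / (ε ^ (1 + α) + Δt)) ^ 2)
      (𝓝[>] 0) (𝓝 0) := by
  have hden := (tendsto_rpow_nhdsGT_zero hα).add_const Δt
  have hsq : Tendsto (fun ε : ℝ => ε ^ 2) (𝓝[>] 0) (𝓝 0) := by
    simpa using (continuous_pow 2).continuousAt.tendsto.mono_left (nhdsWithin_le_nhds (a := (0:ℝ)))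
  have hlim := (hsq.const_mul 4).div (hden.pow 2) (by simpa using hΔt)
  rw [zero_add, mul_zero, zero_div] at hlim
  refine hlim.congr' ?_
  filter_upwards [self_mem_nhdsWithin] with ε (hε : 0 < ε)
  simp only [Pi.div_apply, div_pow, ← Real.rpow_neg_two_mul_mul_rpow_one_add_sq hε α]
  ring

lemma tendsto_sqrt_sq_mul_one_sub_sq_add {ι : Type*} {l : Filter ι} (γ : ℝ) {θ r : ι → ℝ}
    (hθ : Tendsto θ l (𝓝 0)) (hr : Tendsto r l (𝓝 0)) :
    Tendsto (fun i => √(γ ^ 2 * (1 - θ i) ^ 2 + r i)) l (𝓝 |γ|) := by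
  rw [← Real.sqrt_sq_eq_abs]
  refine (Real.continuous_sqrt.tendsto _).comp ?_
  simpa using (((tendsto_const_nhds (x := (1:ℝ))).sub hθ).pow 2).const_mul (γ ^ 2) |>.add hr

lemma tendsto_half_mul_add_sqrt_and_sub_sqrt {ι : Type*} {l : Filter ι} (γ : ℝ) {θ r : ι → ℝ}
    (hθ : Tendsto θ l (𝓝 0)) (hr : Tendsto r l (𝓝 0)) :
    Tendsto (fun i => (1/2) * (γ * (1 - θ i) + √(γ ^ 2 * (1 - θ i) ^ 2 + r i)))
        l (𝓝 ((γ + |γ|) / 2)) ∧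
      Tendsto (fun i => (1/2) * (γ * (1 - θ i) - √(γ ^ 2 * (1 - θ i) ^ 2 + r i)))
        l (𝓝 ((γ - |γ|) / 2)) := by
  have hlin : Tendsto (fun i => γ * (1 - θ i)) l (𝓝 γ) := by
    simpa using ((tendsto_const_nhds (x := (1:ℝ))).sub hθ).const_mul γ
  have hsqrt := tendsto_sqrt_sq_mul_one_sub_sq_add γ hθ hr
  constructor
  · convert (hlin.add hsqrt).const_mul (1/2) using 2
    ring
  · convert (hlin.sub hsqrt).const_mul (1/2) using 2
    ring

/-- As ε → 0⁺, the eigenvalues λ_± of the modified IMEX system tend to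
(γ ± |γ|)/2. -/
theorem stmt_0 (γ Δt α : ℝ) (hΔt : 0 < Δt) (hα : α ∈ Set.Icc (0:ℝ) 1) :
    Tendsto (fun ε : ℝ =>
        (1/2) * (γ * (1 - ε ^ (1+α) / (ε ^ (1+α) + Δt)) +
          Real.sqrt (γ^2 * (1 - ε ^ (1+α) / (ε ^ (1+α) + Δt))^2 +
            4 * ε ^ (-(2*α)) * (ε ^ (1+α) / (ε ^ (1+α) + Δt))^2)))
      (nhdsWithin 0 (Set.Ioi 0)) (nhds ((γ + |γ|)/2)) ∧
    Tendsto (fun ε : ℝ =>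
        (1/2) * (γ * (1 - ε ^ (1+α) / (ε ^ (1+α) + Δt)) -
          Real.sqrt (γ^2 * (1 - ε ^ (1+α) / (ε ^ (1+α) + Δt))^2 +
            4 * ε ^ (-(2*α)) * (ε ^ (1+α) / (ε ^ (1+α) + Δt))^2)))
      (nhdsWithin 0 (Set.Ioi 0)) (nhds ((γ - |γ|)/2)) := by
  have hp : 0 < 1 + α := by linarith [hα.1]
  exact tendsto_half_mul_add_sqrt_and_sub_sqrt γ (tendsto_rpow_div_rpow_add_nhdsGT_zero hp hΔt.ne')
    (tendsto_rpow_neg_two_mul_mul_sq_nhdsGT_zero hp hΔt.ne')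
end

section
/- For γ ∈ ℝ, α ∈ [0,1], Δt > 0, the function ε ↦ λ_+(Δt,ε) = (1/2)(γ(1-θ_α) + sqrt(γ²(1-θ_α)² + 4 ε^(-2α) θ_α²)) with θ_α = ε^(1+α)/(ε^(1+α)+Δt) is bounded on (0,∞): |λ_+(Δt,ε)| ≤ |γ| + Δt^(-α/(1+α)) · C for some constant C depending only on γ, α; in particular λ_+ does not blow up as ε → 0⁺. -/
/-!
Write `θ = ε^(1+α) / (ε^(1+α) + Δt) ∈ [0, 1]`. Since `√(a² + b²) ≤ |a| + |b|`,
`|λ_+| ≤ |γ| (1 - θ) + ε^(-α) θ ≤ |γ| + ε / (ε^(1+α) + Δt)`, and the weighted AM-GM inequality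
`ε · Δt^(α/(1+α)) ≤ ε^(1+α)/(1+α) + α Δt/(1+α) ≤ ε^(1+α) + Δt` bounds the last fraction by
`Δt^(-α/(1+α))` uniformly in `ε`. So `C = 1` works.
-/

open Real

lemma abs_half_mul_add_sqrt_sq_add_sq_le (a b : ℝ) :
    |1 / 2 * (a + √(a ^ 2 + b ^ 2))| ≤ |a| + |b| / 2 := by
  have h_lower : |a| ≤ √(a ^ 2 + b ^ 2) := abs_le_sqrt (by nlinarith [sq_nonneg b])
  have h_upper : √(a ^ 2 + b ^ 2) ≤ |a| + |b| := by
    rw [sqrt_le_left (by positivity)]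
    nlinarith [sq_abs a, sq_abs b, abs_nonneg a, abs_nonneg b]
  rw [abs_le]
  constructor <;> linarith [neg_abs_le a, le_abs_self a, abs_nonneg b]

lemma div_rpow_add_le_rpow {p ε Δt : ℝ} (hp : 1 ≤ p) (hε : 0 ≤ ε) (hΔt : 0 < Δt) :
    ε / (ε ^ p + Δt) ≤ Δt ^ (1 / p - 1) := by
  have hp0 : 0 < p := by linarith
  have hw₁ : 0 ≤ 1 / p := by positivity
  have hw₂ : 0 ≤ 1 - 1 / p := by rw [sub_nonneg, div_le_one hp0]; exact hp
  have hεp : 0 ≤ ε ^ p := rpow_nonneg hε p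
  have amgm : ε * Δt ^ (1 - 1 / p) ≤ ε ^ p + Δt := by
    have h := geom_mean_le_arith_mean2_weighted hw₁ hw₂ hεp hΔt.le (by ring)
    rw [← rpow_mul hε, mul_one_div_cancel hp0.ne', rpow_one] at h
    linarith [mul_nonneg hw₂ hεp, mul_nonneg hw₁ hΔt.le]
  rw [div_le_iff₀ (by positivity), ← neg_sub, rpow_neg hΔt.le, ← div_eq_inv_mul,
    le_div_iff₀ (rpow_pos_of_pos hΔt _)]
  exact amgm

/-- The eigenvalue λ_+(Δt,ε) is bounded on ε ∈ (0,∞):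
|λ_+| ≤ |γ| + Δt^(-α/(1+α)) · C with C depending only on γ, α. -/
theorem stmt_2 (γ α : ℝ) (hα : α ∈ Set.Icc (0:ℝ) 1) :
    ∃ C : ℝ, ∀ Δt : ℝ, 0 < Δt → ∀ ε : ℝ, 0 < ε →
      |(1/2) * (γ * (1 - ε ^ (1+α) / (ε ^ (1+α) + Δt)) +
          Real.sqrt (γ^2 * (1 - ε ^ (1+α) / (ε ^ (1+α) + Δt))^2 +
            4 * ε ^ (-(2*α)) * (ε ^ (1+α) / (ε ^ (1+α) + Δt))^2))|
        ≤ |γ| + Δt ^ (-(α/(1+α))) * C := by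
  refine ⟨1, fun Δt hΔt ε hε => ?_⟩
  have hα0 : 0 ≤ α := hα.1
  set θ := ε ^ (1+α) / (ε ^ (1+α) + Δt)
  have hθ0 : 0 ≤ θ := by positivity
  have hθ1 : θ ≤ 1 := div_le_one_of_le₀ (by linarith) (by positivity)
  have h_sq : 4 * ε ^ (-(2*α)) * θ ^ 2 = (2 * ε ^ (-α) * θ) ^ 2 := by
    rw [mul_pow, mul_pow, ← rpow_mul_natCast hε.le]; ring_nf
  have h_damped : |γ * (1 - θ)| ≤ |γ| := by
    rw [abs_mul, abs_of_nonneg (by linarith : 0 ≤ 1 - θ)]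
    exact mul_le_of_le_one_right (abs_nonneg γ) (by linarith)
  have h_stiff : |2 * ε ^ (-α) * θ| / 2 = ε / (ε ^ (1+α) + Δt) := by
    rw [abs_of_nonneg (by positivity), mul_assoc, mul_div_cancel_left₀ _ two_ne_zero,
      ← mul_div_assoc, ← rpow_add hε]
    norm_num
  have h_exp : 1 / (1 + α) - 1 = -(α / (1 + α)) := by field_simp; ring
  have h_bound := div_rpow_add_le_rpow (by linarith : 1 ≤ 1 + α) hε.le hΔt
  rw [← mul_pow, h_sq, mul_one]
  calc _ ≤ |γ * (1 - θ)| + |2 * ε ^ (-α) * θ| / 2 := abs_half_mul_add_sqrt_sq_add_sq_le _ _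
    _ ≤ |γ| + Δt ^ (-(α/(1+α))) := by rw [h_stiff, ← h_exp]; linarith
end

section
/- For fixed Δt > 0 and c_{-1} > 0, the quantity θ₁(ε) = ε²/(ε² + Δt c_{-1}) is strictly increasing in ε on (0,∞), tends to 0 as ε → 0⁺ and to 1 as ε → ∞; consequently the eigenvalue Λ_+(Δt,ε) = (1/2)(γ(1-θ₁) + sqrt(γ²(1-θ₁)² + 4 ε^(-2)θ₁²)) satisfies ε^(-1)θ₁ = ε/(ε²+Δt c_{-1}) ≤ 1/(2√(Δt c_{-1})), giving the uniform bound Λ_+(Δt,ε) ≤ |γ| + 1/√(Δt c_{-1}) for all ε > 0. -/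
open Filter Topology Set

/-!
Write `D = Δt c₋₁`, `θ = ε² / (ε² + D)`, `a = γ (1 - θ)` and `b = ε⁻¹ θ = ε / (ε² + D)`.
Then `√(a² + 4 b²) ≤ |a| + 2 |b|` gives `Λ₊ ≤ |a| + |b|`, where `|a| ≤ |γ|` because `θ ∈ [0, 1]`,
and `|b| ≤ 1 / (2 √D)` is AM–GM in the form `2 ε √D ≤ ε² + D`.
-/

namespace SqDivSqAdd

variable {D : ℝ}

theorem strictMonoOn (hD : 0 < D) : StrictMonoOn (fun ε : ℝ => ε ^ 2 / (ε ^ 2 + D)) (Ioi 0) := by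
  intro a ha b _ hab
  rw [div_lt_div_iff₀ (by positivity) (by positivity)]
  nlinarith [mul_self_lt_mul_self (le_of_lt ha) hab]

theorem tendsto_nhdsGT_zero (hD : D ≠ 0) :
    Tendsto (fun ε : ℝ => ε ^ 2 / (ε ^ 2 + D)) (𝓝[>] 0) (𝓝 0) := by
  have hcont : ContinuousAt (fun ε : ℝ => ε ^ 2 / (ε ^ 2 + D)) 0 :=
    ContinuousAt.div (by fun_prop) (by fun_prop) (by simpa using hD)
  simpa [ContinuousWithinAt] using hcont.continuousWithinAt (s := Ioi 0)

theorem tendsto_atTop (D : ℝ) : Tendsto (fun ε : ℝ => ε ^ 2 / (ε ^ 2 + D)) atTop (𝓝 1) := by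
  have hden : Tendsto (fun ε : ℝ => ε ^ 2 + D) atTop atTop :=
    tendsto_atTop_add_const_right _ _ (tendsto_pow_atTop two_ne_zero)
  have hlim : Tendsto (fun ε : ℝ => 1 - D / (ε ^ 2 + D)) atTop (𝓝 1) := by
    simpa using tendsto_const_nhds.sub (tendsto_const_nhds.div_atTop hden)
  refine hlim.congr' ?_
  filter_upwards [hden.eventually_ne_atTop 0] with ε hε
  field_simp
  ring

theorem mem_Icc (hD : 0 ≤ D) (ε : ℝ) : ε ^ 2 / (ε ^ 2 + D) ∈ Icc 0 1 :=
  ⟨by positivity, div_le_one_of_le₀ (by linarith) (by positivity)⟩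

theorem inv_mul (D : ℝ) {ε : ℝ} (hε : ε ≠ 0) : ε⁻¹ * (ε ^ 2 / (ε ^ 2 + D)) = ε / (ε ^ 2 + D) := by
  field_simp

end SqDivSqAdd

theorem div_sq_add_le_one_div_two_mul_sqrt {D : ℝ} (hD : 0 < D) (ε : ℝ) :
    ε / (ε ^ 2 + D) ≤ 1 / (2 * √D) := by
  have hsq : √D ^ 2 = D := Real.sq_sqrt hD.le
  rw [div_le_div_iff₀ (by positivity) (by positivity)]
  nlinarith [sq_nonneg (ε - √D)]

theorem half_mul_add_sqrt_sq_add_four_mul_sq_le (a b : ℝ) :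
    1 / 2 * (a + √(a ^ 2 + 4 * b ^ 2)) ≤ |a| + |b| := by
  have hsqrt : √(a ^ 2 + 4 * b ^ 2) ≤ |a| + 2 * |b| := by
    rw [Real.sqrt_le_left (by positivity)]
    nlinarith [sq_abs a, sq_abs b, abs_nonneg a, abs_nonneg b]
  linarith [le_abs_self a]

/-- Monotonicity and limits of θ₁(ε) = ε²/(ε²+Δt c₋₁), the AM–GM bound
ε/(ε²+Δt c₋₁) ≤ 1/(2√(Δt c₋₁)), and the resulting uniform bound
Λ₊(Δt,ε) ≤ |γ| + 1/√(Δt c₋₁) for all ε > 0. -/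
theorem stmt_16 (γ Δt cm1 : ℝ) (hΔt : 0 < Δt) (hc : 0 < cm1) :
    StrictMonoOn (fun ε : ℝ => ε^2 / (ε^2 + Δt * cm1)) (Set.Ioi 0) ∧
    Tendsto (fun ε : ℝ => ε^2 / (ε^2 + Δt * cm1))
      (nhdsWithin 0 (Set.Ioi 0)) (nhds 0) ∧
    Tendsto (fun ε : ℝ => ε^2 / (ε^2 + Δt * cm1)) atTop (nhds 1) ∧
    (∀ ε : ℝ, 0 < ε →
      ε / (ε^2 + Δt * cm1) ≤ 1 / (2 * Real.sqrt (Δt * cm1))) ∧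
    (∀ ε : ℝ, 0 < ε →
      (1/2) * (γ * (1 - ε^2 / (ε^2 + Δt * cm1)) +
          Real.sqrt (γ^2 * (1 - ε^2 / (ε^2 + Δt * cm1))^2 +
            4 * ε⁻¹^2 * (ε^2 / (ε^2 + Δt * cm1))^2))
        ≤ |γ| + 1 / Real.sqrt (Δt * cm1)) := by
  set D := Δt * cm1
  have hD : 0 < D := mul_pos hΔt hc
  refine ⟨SqDivSqAdd.strictMonoOn hD, SqDivSqAdd.tendsto_nhdsGT_zero hD.ne',
    SqDivSqAdd.tendsto_atTop D, fun ε _ => div_sq_add_le_one_div_two_mul_sqrt hD ε,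
    fun ε hε => ?_⟩
  set θ := ε ^ 2 / (ε ^ 2 + D)
  obtain ⟨hθ0, hθ1⟩ := SqDivSqAdd.mem_Icc hD.le ε
  have ha : |γ * (1 - θ)| ≤ |γ| := by
    rw [abs_mul, abs_of_nonneg (sub_nonneg.2 hθ1)]
    exact mul_le_of_le_one_right (abs_nonneg γ) (sub_le_self 1 hθ0)
  have hb : |ε⁻¹ * θ| ≤ 1 / √D := by
    rw [SqDivSqAdd.inv_mul D hε.ne', abs_of_nonneg (by positivity)]
    refine (div_sq_add_le_one_div_two_mul_sqrt hD ε).trans ?_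
    gcongr
    linarith [Real.sqrt_pos.2 hD]
  calc 1 / 2 * (γ * (1 - θ) + √(γ ^ 2 * (1 - θ) ^ 2 + 4 * ε⁻¹ ^ 2 * θ ^ 2))
      = 1 / 2 * (γ * (1 - θ) + √((γ * (1 - θ)) ^ 2 + 4 * (ε⁻¹ * θ) ^ 2)) := by ring_nf
    _ ≤ |γ * (1 - θ)| + |ε⁻¹ * θ| := half_mul_add_sqrt_sq_add_four_mul_sq_le _ _
    _ ≤ |γ| + 1 / √D := add_le_add ha hb
end

section
/- Let s ≥ 1 and p ≤ s. The 2p+1 linear constraints on (a, b, c_{-1}, c) ∈ ℝ^s × ℝ^s × ℝ × ℝ^s given by the IMEX order conditions of order p — namely 1+Σ_j a_j = 0, and for each k = 1,…,p both 1/k! + Σ_j (-j)^k a_j/k! = Σ_j (-j)^(k-1) b_j/(k-1)! and 1/k! + Σ_j (-j)^k a_j/k! = c_{-1}/(k-1)! + Σ_j (-j)^(k-1) c_j/(k-1)! — are linearly independent as linear functionals on ℝ^(3s+1). -/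
/-- Coefficient vectors (on (a, b, c₋₁, c) ∈ ℝ^s × ℝ^s × ℝ × ℝ^s) of the
linear parts of the 2p+1 order-p IMEX order conditions: `none` is the
normalization Σ aⱼ; `some (inl k)` is the explicit condition of order k+1;
`some (inr k)` is the implicit condition of order k+1. -/
noncomputable def imexConditionVector (s p : ℕ) :
    Option (Fin p ⊕ Fin p) → (Fin s → ℝ) × (Fin s → ℝ) × ℝ × (Fin s → ℝ)
  | none => ((fun _ => 1), 0, 0, 0)
  | some (.inl k) =>
      ((fun j => (-(j.1 : ℝ)) ^ ((k : ℕ) + 1) / (Nat.factorial ((k : ℕ) + 1) : ℝ)),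
       (fun j => -(-(j.1 : ℝ)) ^ (k : ℕ) / (Nat.factorial (k : ℕ) : ℝ)), 0, 0)
  | some (.inr k) =>
      ((fun j => (-(j.1 : ℝ)) ^ ((k : ℕ) + 1) / (Nat.factorial ((k : ℕ) + 1) : ℝ)),
       0, -(1 : ℝ) / (Nat.factorial (k : ℕ) : ℝ),
       (fun j => -(-(j.1 : ℝ)) ^ (k : ℕ) / (Nat.factorial (k : ℕ) : ℝ)))

/-!
The b- and c-blocks of a vanishing combination `∑ gᵢ • vᵢ` are polynomials of degree `< p` in
the node `-j`, vanishing at the `s ≥ p` distinct nodes `0, -1, …, -(s-1)`; the Vandermonde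
determinant forces their coefficients, hence the weights of the explicit and implicit
conditions, to vanish. The a-block at the node `0` then reads off the weight of the
normalization.
-/

open Finset

theorem Matrix.eq_zero_of_forall_index_sum_mul_pow_eq_zero_of_le {R : Type*} [CommRing R]
    [IsDomain R] {p s : ℕ} (hp : p ≤ s) {x : Fin s → R} (hx : Function.Injective x)
    {c : Fin p → R} (h : ∀ j, ∑ k, c k * x j ^ (k : ℕ) = 0) : c = 0 :=
  Matrix.eq_zero_of_forall_index_sum_mul_pow_eq_zero (hx.comp (Fin.castLE_injective hp))
    fun _ => h _

lemma eq_zero_of_forall_sum_mul_neg_pow_div_factorial_eq_zero {p s : ℕ} (hp : p ≤ s)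
    {g : Fin p → ℝ}
    (h : ∀ j : Fin s, ∑ k, g k * (-(-(j : ℝ)) ^ (k : ℕ) / (k : ℕ).factorial) = 0) : g = 0 := by
  have hnodes : Function.Injective fun j : Fin s => -(j : ℝ) :=
    neg_injective.comp (Nat.cast_injective.comp Fin.val_injective)
  have hc := Matrix.eq_zero_of_forall_index_sum_mul_pow_eq_zero_of_le hp hnodes
    (c := fun k => -g k / (k : ℕ).factorial) fun j => by
      rw [← h j]; exact sum_congr rfl fun k _ => by ring
  funext k
  simpa [Nat.factorial_ne_zero] using congrFun hc k

section

variable {s p : ℕ} (g : Option (Fin p ⊕ Fin p) → ℝ)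

lemma sum_smul_imexConditionVector_a_zero (hs : 0 < s) :
    (∑ i, g i • imexConditionVector s p i).1 ⟨0, hs⟩ = g none := by
  simp [imexConditionVector, Fintype.sum_option, Fintype.sum_sum_type, Prod.fst_sum,
    Finset.sum_apply]

lemma sum_smul_imexConditionVector_b (j : Fin s) :
    (∑ i, g i • imexConditionVector s p i).2.1 j =
      ∑ k, g (some (.inl k)) * (-(-(j : ℝ)) ^ (k : ℕ) / (k : ℕ).factorial) := by
  simp [imexConditionVector, Fintype.sum_option, Fintype.sum_sum_type, Prod.fst_sum, Prod.snd_sum,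
    Finset.sum_apply]

lemma sum_smul_imexConditionVector_c (j : Fin s) :
    (∑ i, g i • imexConditionVector s p i).2.2.2 j =
      ∑ k, g (some (.inr k)) * (-(-(j : ℝ)) ^ (k : ℕ) / (k : ℕ).factorial) := by
  simp [imexConditionVector, Fintype.sum_option, Fintype.sum_sum_type, Prod.snd_sum,
    Finset.sum_apply]

end

/-- For p ≤ s, the 2p+1 linear constraints given by the IMEX order conditions
of order p are linearly independent as functionals on ℝ^(3s+1). -/
theorem stmt_19 (s p : ℕ) (hs : 1 ≤ s) (hp : p ≤ s) :
    LinearIndependent ℝ (imexConditionVector s p) := by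
  rw [Fintype.linearIndependent_iff]
  intro g hg
  have hb := eq_zero_of_forall_sum_mul_neg_pow_div_factorial_eq_zero hp fun j => by
    rw [← sum_smul_imexConditionVector_b, hg]; rfl
  have hc := eq_zero_of_forall_sum_mul_neg_pow_div_factorial_eq_zero hp fun j => by
    rw [← sum_smul_imexConditionVector_c, hg]; rfl
  have ha : g none = 0 := by
    rw [← sum_smul_imexConditionVector_a_zero g hs, hg]; rfl
  rintro (_ | k | k)
  · exact ha
  · exact congrFun hb k
  · exact congrFun hc k
end
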